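/- Let ẑ_M and z_M be as follows: z_M | z_O is Gaussian with mean ẑ_M = W_M M_O⁻¹ W_Oᵀ z_O and covariance C = σ²I + σ²W_M M_O⁻¹W_Mᵀ, where M_O = σ²I_k + W_OᵀW_O. Then the expected conditional squared error satisfies E[‖ẑ_M − z_M‖² | z_O] = tr(C) ≤ |M| σ² (1 + λ_max(W_M)²/(σ² + λ_min(W_O)²)). -/

import Mathlib

open Matrix MeasureTheory ProbabilityTheory

/-!
The Gram shift `A = σ² I + W_Oᵀ W_O` satisfies `vᵀ A v ≥ (σ² + λ_min²) ‖v‖²`. For such a coercive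
matrix, Cauchy–Schwarz applied to `w = A⁻¹ u` gives `0 ≤ uᵀ A⁻¹ u ≤ ‖u‖² / (σ² + λ_min²)`, and every
row `u` of `W_M` has `‖u‖ ≤ λ_max`. Hence each diagonal entry of `C` lies between `σ²` and
`σ² (1 + λ_max² / (σ² + λ_min²))`, which bounds the trace. Since these entries are nonzero, the
hypothesis on the conditional covariances rules out the junk value `0` of a conditional expectation
of a non-integrable function, so conditional expectation is additive over the coordinates.
-/

namespace Matrix

variable {m n : Type*} [Fintype m] [Fintype n]

theorem dotProduct_self_nonneg (v : n → ℝ) : 0 ≤ v ⬝ᵥ v :=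
  Finset.sum_nonneg fun i _ => mul_self_nonneg (v i)

theorem dotProduct_sq_le (v w : n → ℝ) : (v ⬝ᵥ w) ^ 2 ≤ (v ⬝ᵥ v) * (w ⬝ᵥ w) := by
  simpa only [dotProduct, sq] using Finset.sum_mul_sq_le_sq_mul_sq Finset.univ v w

theorem sq_apply_le_dotProduct_self (v : n → ℝ) (i : n) : v i ^ 2 ≤ v ⬝ᵥ v := by
  simpa only [dotProduct, sq] using
    Finset.single_le_sum (fun j _ => mul_self_nonneg (v j)) (Finset.mem_univ i)

omit [Fintype m] in
theorem mul_mul_transpose_apply_self {α : Type*} [CommSemiring α] (W : Matrix m n α)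
    (B : Matrix n n α) (i : m) : (W * B * Wᵀ) i i = W i ⬝ᵥ B *ᵥ W i := by
  rw [mul_apply', mul_apply_eq_vecMul, ← dotProduct_mulVec]
  rfl

theorem dotProduct_transpose_mul_self_mulVec (W : Matrix m n ℝ) (v : n → ℝ) :
    v ⬝ᵥ (Wᵀ * W) *ᵥ v = W *ᵥ v ⬝ᵥ W *ᵥ v := by
  rw [← mulVec_mulVec, dotProduct_transpose_mulVec]

theorem le_dotProduct_smul_one_add_transpose_mul_self_mulVec [DecidableEq n] (W : Matrix m n ℝ)
    {s l : ℝ} (hW : ∀ v, l ^ 2 * (v ⬝ᵥ v) ≤ W *ᵥ v ⬝ᵥ W *ᵥ v) (v : n → ℝ) :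
    (s + l ^ 2) * (v ⬝ᵥ v) ≤ v ⬝ᵥ (s • 1 + Wᵀ * W) *ᵥ v := by
  rw [add_mulVec, smul_mulVec, one_mulVec, dotProduct_add, dotProduct_smul, smul_eq_mul,
    dotProduct_transpose_mul_self_mulVec]
  linarith [hW v]

theorem dotProduct_row_self_le {W : Matrix m n ℝ} {l : ℝ}
    (hW : ∀ v, W *ᵥ v ⬝ᵥ W *ᵥ v ≤ l ^ 2 * (v ⬝ᵥ v)) (i : m) : W i ⬝ᵥ W i ≤ l ^ 2 := by
  have hrow : (W *ᵥ W i) i = W i ⬝ᵥ W i := rfl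
  have hsq : (W i ⬝ᵥ W i) ^ 2 ≤ l ^ 2 * (W i ⬝ᵥ W i) :=
    hrow ▸ (sq_apply_le_dotProduct_self _ i).trans (hW (W i))
  rcases (dotProduct_self_nonneg (W i)).eq_or_lt with h | h
  · rw [← h]; positivity
  · nlinarith

section Coercive

variable {A : Matrix n n ℝ} {c : ℝ}

theorem isUnit_det_of_le_dotProduct_mulVec [DecidableEq n] (hc : 0 < c)
    (hA : ∀ v, c * (v ⬝ᵥ v) ≤ v ⬝ᵥ A *ᵥ v) : IsUnit A.det := by
  refine isUnit_iff_ne_zero.2 fun hdet => ?_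
  obtain ⟨v, hv, hAv⟩ := exists_mulVec_eq_zero_iff.2 hdet
  have hvv : 0 < v ⬝ᵥ v :=
    (dotProduct_self_nonneg v).lt_of_ne' (dotProduct_self_eq_zero.not.2 hv :)
  have := hA v
  rw [hAv, dotProduct_zero] at this
  nlinarith

theorem dotProduct_inv_mulVec_bounds [DecidableEq n] (hc : 0 < c)
    (hA : ∀ v, c * (v ⬝ᵥ v) ≤ v ⬝ᵥ A *ᵥ v) (u : n → ℝ) :
    0 ≤ u ⬝ᵥ A⁻¹ *ᵥ u ∧ c * (u ⬝ᵥ A⁻¹ *ᵥ u) ≤ u ⬝ᵥ u := by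
  set w := A⁻¹ *ᵥ u
  have hAw : A *ᵥ w = u := by
    rw [mulVec_mulVec, mul_nonsing_inv A (isUnit_det_of_le_dotProduct_mulVec hc hA), one_mulVec]
  have hlow : c * (w ⬝ᵥ w) ≤ u ⬝ᵥ w := by simpa only [hAw, dotProduct_comm w] using hA w
  have hnonneg : 0 ≤ u ⬝ᵥ w := (mul_nonneg hc.le (dotProduct_self_nonneg w)).trans hlow
  refine ⟨hnonneg, ?_⟩
  rcases hnonneg.eq_or_lt with h | h
  · rw [← h, mul_zero]; exact dotProduct_self_nonneg u
  · nlinarith [dotProduct_sq_le u w, dotProduct_self_nonneg u]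

theorem mul_inv_mul_transpose_diag_bounds [DecidableEq n] {W : Matrix m n ℝ} {l : ℝ} (hc : 0 < c)
    (hA : ∀ v, c * (v ⬝ᵥ v) ≤ v ⬝ᵥ A *ᵥ v) (hW : ∀ v, W *ᵥ v ⬝ᵥ W *ᵥ v ≤ l ^ 2 * (v ⬝ᵥ v))
    (i : m) : 0 ≤ (W * A⁻¹ * Wᵀ) i i ∧ c * (W * A⁻¹ * Wᵀ) i i ≤ l ^ 2 := by
  rw [mul_mul_transpose_apply_self]
  obtain ⟨hnonneg, hle⟩ := dotProduct_inv_mulVec_bounds hc hA (W i)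
  exact ⟨hnonneg, hle.trans (dotProduct_row_self_le hW i)⟩

end Coercive

end Matrix

namespace MeasureTheory

variable {Ω E : Type*} {m m₀ : MeasurableSpace Ω} {μ : Measure Ω}
  [NormedAddCommGroup E] [NormedSpace ℝ E]

theorem integrable_of_condExp_ae_eq_const {f : Ω → E} {c : E} (hc : c ≠ 0)
    (h : μ[f | m] =ᵐ[μ] fun _ => c) : Integrable f μ := by
  rcases eq_zero_or_neZero μ with rfl | _
  · exact integrable_zero_measure
  by_contra hf
  rw [condExp_of_not_integrable hf] at h
  obtain ⟨ω, hω⟩ := h.exists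
  exact hc hω.symm

theorem condExp_finsetSum_ae_eq_const [CompleteSpace E] {ι : Type*} (s : Finset ι)
    {f : ι → Ω → E} {c : ι → E}
    (hc : ∀ i ∈ s, c i ≠ 0) (h : ∀ i ∈ s, μ[f i | m] =ᵐ[μ] fun _ => c i) :
    μ[fun ω => ∑ i ∈ s, f i ω | m] =ᵐ[μ] fun _ => ∑ i ∈ s, c i := by
  have hsum := (condExp_finsetSum
    (fun i hi => integrable_of_condExp_ae_eq_const (hc i hi) (h i hi)) m).trans (eventuallyEq_sum h)
  simpa only [Finset.sum_fn] using hsum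

end MeasureTheory

theorem expected_conditional_squared_error_general {Ω : Type*} [MeasureSpace Ω]
    {q m k : ℕ} (WO : Matrix (Fin q) (Fin k) ℝ) (WM : Matrix (Fin m) (Fin k) ℝ)
    (σ : ℝ) (hσ : 0 < σ)
    (zO : Ω → Fin q → ℝ) (zM : Ω → Fin m → ℝ)
    (C : Matrix (Fin m) (Fin m) ℝ)
    (hC : C = σ ^ 2 • (1 : Matrix (Fin m) (Fin m) ℝ) +
        σ ^ 2 • (WM * (σ ^ 2 • (1 : Matrix (Fin k) (Fin k) ℝ) + WOᵀ * WO)⁻¹ * WMᵀ))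
    (zhat : Ω → Fin m → ℝ)
    (hcov : ∀ i j : Fin m,
      (ℙ : Measure Ω)[(fun ω => (zM ω i - zhat ω i) * (zM ω j - zhat ω j)) |
          MeasurableSpace.comap zO inferInstance]
        =ᵐ[(ℙ : Measure Ω)] fun _ => C i j)
    (lammax lammin : ℝ)
    (hmax : ∀ v : Fin k → ℝ, (WM.mulVec v) ⬝ᵥ (WM.mulVec v) ≤ lammax ^ 2 * (v ⬝ᵥ v))
    (hmin : ∀ v : Fin k → ℝ, lammin ^ 2 * (v ⬝ᵥ v) ≤ (WO.mulVec v) ⬝ᵥ (WO.mulVec v)) :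
    ((ℙ : Measure Ω)[(fun ω => ∑ i, (zhat ω i - zM ω i) ^ 2) |
        MeasurableSpace.comap zO inferInstance]
      =ᵐ[(ℙ : Measure Ω)] fun _ => C.trace) ∧
    C.trace ≤ (m : ℝ) * σ ^ 2 * (1 + lammax ^ 2 / (σ ^ 2 + lammin ^ 2)) := by
  set A := σ ^ 2 • (1 : Matrix (Fin k) (Fin k) ℝ) + WOᵀ * WO
  set c := σ ^ 2 + lammin ^ 2
  have hc : 0 < c := by positivity
  have hA : ∀ v, c * (v ⬝ᵥ v) ≤ v ⬝ᵥ A *ᵥ v :=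
    le_dotProduct_smul_one_add_transpose_mul_self_mulVec WO hmin
  set B := WM * A⁻¹ * WMᵀ
  have hB := mul_inv_mul_transpose_diag_bounds hc hA hmax
  have hCii : ∀ i, C i i = σ ^ 2 * (1 + B i i) := fun i => by
    rw [hC]
    simp only [Matrix.add_apply, Matrix.smul_apply, one_apply_eq, smul_eq_mul]
    ring
  have hCii_pos : ∀ i, 0 < C i i := fun i => by
    have := (hB i).1
    rw [hCii]
    positivity
  have hCii_le : ∀ i, C i i ≤ σ ^ 2 * (1 + lammax ^ 2 / c) := fun i => by
    rw [hCii]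
    gcongr
    rw [le_div_iff₀ hc, mul_comm]
    exact (hB i).2
  constructor
  · have hsq : (fun ω => ∑ i, (zhat ω i - zM ω i) ^ 2) =
        fun ω => ∑ i, (zM ω i - zhat ω i) * (zM ω i - zhat ω i) := by
      funext ω
      exact Finset.sum_congr rfl fun i _ => by ring
    rw [hsq]
    exact condExp_finsetSum_ae_eq_const _ (fun i _ => (hCii_pos i).ne') fun i _ => hcov i i
  · calc C.trace = ∑ i, C i i := rfl
      _ ≤ ∑ _i : Fin m, σ ^ 2 * (1 + lammax ^ 2 / c) := Finset.sum_le_sum fun i _ => hCii_le i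
      _ = (m : ℝ) * σ ^ 2 * (1 + lammax ^ 2 / c) := by
        rw [Finset.sum_const, Finset.card_univ, Fintype.card_fin, nsmul_eq_mul, mul_assoc]

/-- If `z_M | z_O` is Gaussian with mean `ẑ_M = W_M M_O⁻¹ W_Oᵀ z_O` and covariance
`C = σ²I + σ²W_M M_O⁻¹ W_Mᵀ` (so the conditional covariance entries are the constants
`C i j`), then the expected conditional squared error is `E[‖ẑ_M − z_M‖² | z_O] = tr C`,
and `tr C ≤ |M| σ² (1 + λ_max(W_M)²/(σ² + λ_min(W_O)²))`. -/
theorem expected_conditional_squared_error {Ω : Type*} [MeasureSpace Ω]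
    [IsProbabilityMeasure (ℙ : Measure Ω)]
    {q m k : ℕ} (WO : Matrix (Fin q) (Fin k) ℝ) (WM : Matrix (Fin m) (Fin k) ℝ)
    (σ : ℝ) (hσ : 0 < σ)
    (zO : Ω → Fin q → ℝ) (zM : Ω → Fin m → ℝ) (hmO : Measurable zO) (hmM : Measurable zM)
    (C : Matrix (Fin m) (Fin m) ℝ)
    (hC : C = σ ^ 2 • (1 : Matrix (Fin m) (Fin m) ℝ) +
        σ ^ 2 • (WM * (σ ^ 2 • (1 : Matrix (Fin k) (Fin k) ℝ) + WOᵀ * WO)⁻¹ * WMᵀ))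
    (zhat : Ω → Fin m → ℝ)
    (hzhat : ∀ ω, zhat ω =
      (WM * (σ ^ 2 • (1 : Matrix (Fin k) (Fin k) ℝ) + WOᵀ * WO)⁻¹ * WOᵀ).mulVec (zO ω))
    (hcov : ∀ i j : Fin m,
      (ℙ : Measure Ω)[(fun ω => (zM ω i - zhat ω i) * (zM ω j - zhat ω j)) |
          MeasurableSpace.comap zO inferInstance]
        =ᵐ[(ℙ : Measure Ω)] fun _ => C i j)
    (lammax lammin : ℝ) (hlammax0 : 0 ≤ lammax) (hlammin0 : 0 ≤ lammin)
    (hmax : ∀ v : Fin k → ℝ, (WM.mulVec v) ⬝ᵥ (WM.mulVec v) ≤ lammax ^ 2 * (v ⬝ᵥ v))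
    (hmin : ∀ v : Fin k → ℝ, lammin ^ 2 * (v ⬝ᵥ v) ≤ (WO.mulVec v) ⬝ᵥ (WO.mulVec v)) :
    ((ℙ : Measure Ω)[(fun ω => ∑ i, (zhat ω i - zM ω i) ^ 2) |
        MeasurableSpace.comap zO inferInstance]
      =ᵐ[(ℙ : Measure Ω)] fun _ => C.trace) ∧
    C.trace ≤ (m : ℝ) * σ ^ 2 * (1 + lammax ^ 2 / (σ ^ 2 + lammin ^ 2)) :=
  expected_conditional_squared_error_general WO WM σ hσ zO zM C hC zhat hcov lammax lammin hmax hmin
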